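/- The coloring lower-bound graph G_{x,y} is 3-colorable if and only if x and y are not disjoint, i.e., if and only if there exists a pair (i,j) ∈ {0,…,k−1}² with x[i,j] = y[i,j] = 1. -/

import Mathlib

/-!
Normalise a 3-colouring `C` so that `c_a^m` and `c_b^m` both get colour `m`; the two triangles
and the edges between them fix `C` on the `c`-nodes up to a permutation of the colours. Write
`own ℓ` (`ownIdx ℓ`) for the index of the `c`-node joined to the bit-nodes of `A_ℓ, B_ℓ`, and
`oth ℓ` (`othIdx ℓ`) for the remaining nonzero one. Each node `s_ℓ^i` sees `c_s^{oth ℓ}`, so it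
has colour `0` or `own ℓ`. If all of them had colour `own ℓ`, the path
`s̄_ℓ^0, s̿_ℓ^0, s̄_ℓ^1, …` would be forced to alternate `0, oth ℓ`, and its last node clashes
with `c_s^{oth ℓ}`. So some `s_ℓ^i` has colour `0`, and then its bit-nodes `bin(s_ℓ^i)` have
colour `oth ℓ`. All bit-nodes of `A_ℓ, B_ℓ` avoid `own ℓ`, so each 4-cycle is 2-coloured and
the bit-nodes of `A_ℓ` and `B_ℓ` agree; hence the `0`-coloured nodes of `A_ℓ` and of `B_ℓ` have
the same index. So `a_1^i, a_2^j, b_1^i, b_2^j` all have colour `0`, and neither `a_1^i a_2^j`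
nor `b_1^i b_2^j` is an edge: `x[i,j] = y[i,j] = 1`.

Conversely, if `x[i,j] = y[i,j] = 1` the same picture is a colouring: the selected nodes get `0`,
the others `own ℓ`, the bit-nodes spell the selected index, and the pairs `s̄_ℓ^i, s̿_ℓ^i` are
coloured `0, oth ℓ` before the selected index, `own ℓ, 0` at it and `oth ℓ, 0` after it.
-/

/-- Vertices of the coloring lower-bound graph.  The side `s : Bool`
distinguishes Alice (`false`, the `a`'s) from Bob (`true`, the `b`'s), and
`ℓ : Bool` distinguishes index `1` (`false`) from index `2` (`true`).
So `node false false i = a_1^i`, `bar s ℓ i = s̄_ℓ^i`, `dbar s ℓ i = s̿_ℓ^i`,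
`f s ℓ h = f_S^h`, `t s ℓ h = t_S^h`, `c false m = c_a^m`, `c true m = c_b^m`. -/
inductive CVertex (k logk : ℕ) where
  | node (s ℓ : Bool) (i : Fin k)
  | bar (s ℓ : Bool) (i : Fin k)
  | dbar (s ℓ : Bool) (i : Fin k)
  | f (s ℓ : Bool) (h : Fin logk)
  | t (s ℓ : Bool) (h : Fin logk)
  | c (s : Bool) (m : Fin 3)
deriving DecidableEq

/-- The index, among `{0,1,2}`, of the `c`-node attached to the bit-nodes of the
sets indexed by `ℓ` (i.e. `1` for `ℓ = 1` and `2` for `ℓ = 2`). -/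
def ownIdx (ℓ : Bool) : Fin 3 := if ℓ then 2 else 1

/-- The "other" index: `2` for `ℓ = 1` and `1` for `ℓ = 2`. -/
def othIdx (ℓ : Bool) : Fin 3 := if ℓ then 1 else 2

/-- Base relation generating the edges (i)–(x) of the coloring lower-bound graph
`G_{x,y}`. -/
def cRel (k logk : ℕ) (x y : Fin k → Fin k → Bool) (u v : CVertex k logk) : Prop :=
  -- (i) each node s_ℓ^i is adjacent to exactly its bit-nodes bin(s_ℓ^i)
  (∃ (s ℓ : Bool) (i : Fin k) (h : Fin logk), u = CVertex.node s ℓ i ∧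
    v = if i.val.testBit h.val then CVertex.t s ℓ h else CVertex.f s ℓ h) ∨
  -- (ii) the 4-cycles on the bit-nodes
  (∃ (ℓ : Bool) (h : Fin logk),
    (u = CVertex.f false ℓ h ∧ v = CVertex.t false ℓ h) ∨
    (u = CVertex.t false ℓ h ∧ v = CVertex.f true ℓ h) ∨
    (u = CVertex.f true ℓ h ∧ v = CVertex.t true ℓ h) ∨
    (u = CVertex.t true ℓ h ∧ v = CVertex.f false ℓ h)) ∨
  -- (iii) the two triangles on the c-nodes, and c_a^m ~ c_b^m' for m ≠ m'
  (∃ (s : Bool) (m m' : Fin 3), m ≠ m' ∧ u = CVertex.c s m ∧ v = CVertex.c s m') ∨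
  (∃ (m m' : Fin 3), m ≠ m' ∧ u = CVertex.c false m ∧ v = CVertex.c true m') ∨
  -- (iv) the path edges (s_ℓ^i, s̄_ℓ^i), (s̄_ℓ^i, s̿_ℓ^i), (s̿_ℓ^i, s̄_ℓ^{i+1})
  (∃ (s ℓ : Bool) (i : Fin k), u = CVertex.node s ℓ i ∧ v = CVertex.bar s ℓ i) ∨
  (∃ (s ℓ : Bool) (i : Fin k), u = CVertex.bar s ℓ i ∧ v = CVertex.dbar s ℓ i) ∨
  (∃ (s ℓ : Bool) (i : Fin k) (hi : i.val + 1 < k),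
    u = CVertex.dbar s ℓ i ∧ v = CVertex.bar s ℓ ⟨i.val + 1, hi⟩) ∨
  -- (v) c_s^ℓ adjacent to every bit-node of the sets indexed by ℓ
  (∃ (s ℓ : Bool) (h : Fin logk), u = CVertex.c s (ownIdx ℓ) ∧
    (v = CVertex.f s ℓ h ∨ v = CVertex.t s ℓ h)) ∨
  -- (vi)–(ix) c_s^{oth ℓ} ~ s_ℓ^i, c_s^{own ℓ} ~ s̿_ℓ^i,
  --           c_s^{oth ℓ} ~ s̄_ℓ^0 and c_s^{oth ℓ} ~ s̿_ℓ^{k−1}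
  (∃ (s ℓ : Bool) (i : Fin k), u = CVertex.c s (othIdx ℓ) ∧ v = CVertex.node s ℓ i) ∨
  (∃ (s ℓ : Bool) (i : Fin k), u = CVertex.c s (ownIdx ℓ) ∧ v = CVertex.dbar s ℓ i) ∨
  (∃ (s ℓ : Bool) (i : Fin k), i.val = 0 ∧
    u = CVertex.c s (othIdx ℓ) ∧ v = CVertex.bar s ℓ i) ∨
  (∃ (s ℓ : Bool) (i : Fin k), i.val = k - 1 ∧
    u = CVertex.c s (othIdx ℓ) ∧ v = CVertex.dbar s ℓ i) ∨
  -- (x) the input edges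
  (∃ i j : Fin k, x i j = false ∧
    u = CVertex.node false false i ∧ v = CVertex.node false true j) ∨
  (∃ i j : Fin k, y i j = false ∧
    u = CVertex.node true false i ∧ v = CVertex.node true true j)

/-- The coloring lower-bound graph `G_{x,y}`. -/
def cGraph (k logk : ℕ) (x y : Fin k → Fin k → Bool) : SimpleGraph (CVertex k logk) :=
  SimpleGraph.fromRel (cRel k logk x y)

theorem Nat.eq_of_testBit_eq_of_lt_two_pow {a b n : ℕ} (ha : a < 2 ^ n) (hb : b < 2 ^ n)
    (h : ∀ j < n, a.testBit j = b.testBit j) : a = b := by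
  refine Nat.eq_of_testBit_eq fun j => ?_
  by_cases hj : j < n
  · exact h j hj
  · have hn : 2 ^ n ≤ 2 ^ j := Nat.pow_le_pow_right two_pos (not_lt.1 hj)
    rw [Nat.testBit_lt_two_pow (ha.trans_le hn), Nat.testBit_lt_two_pow (hb.trans_le hn)]

theorem Fin.eq_of_ne_of_ne {a b c m : Fin 3} (hab : a ≠ b) (hac : a ≠ c) (hbc : b ≠ c)
    (hma : m ≠ a) (hmb : m ≠ b) : m = c := by
  omega

theorem SimpleGraph.Coloring.eq_of_adj_of_adj {V : Type*} {G : SimpleGraph V}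
    (C : G.Coloring (Fin 3)) {u v w : V} {a b c : Fin 3} (hab : a ≠ b) (hac : a ≠ c)
    (hbc : b ≠ c) (hu : G.Adj v u) (hw : G.Adj v w) (hCu : C u = a) (hCw : C w = b) :
    C v = c :=
  Fin.eq_of_ne_of_ne hab hac hbc (hCu ▸ C.valid hu) (hCw ▸ C.valid hw)

@[simp] theorem ownIdx_ne_zero (ℓ : Bool) : ownIdx ℓ ≠ 0 := by cases ℓ <;> decide
@[simp] theorem zero_ne_ownIdx (ℓ : Bool) : 0 ≠ ownIdx ℓ := (ownIdx_ne_zero ℓ).symm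
@[simp] theorem othIdx_ne_zero (ℓ : Bool) : othIdx ℓ ≠ 0 := by cases ℓ <;> decide
@[simp] theorem zero_ne_othIdx (ℓ : Bool) : 0 ≠ othIdx ℓ := (othIdx_ne_zero ℓ).symm
@[simp] theorem ownIdx_ne_othIdx (ℓ : Bool) : ownIdx ℓ ≠ othIdx ℓ := by cases ℓ <;> decide
@[simp] theorem othIdx_ne_ownIdx (ℓ : Bool) : othIdx ℓ ≠ ownIdx ℓ := (ownIdx_ne_othIdx ℓ).symm

namespace cGraph

variable {k logk : ℕ} {x y : Fin k → Fin k → Bool}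

theorem adj_of_cRel {u v : CVertex k logk} (hne : u ≠ v) (h : cRel k logk x y u v) :
    (cGraph k logk x y).Adj u v :=
  (SimpleGraph.fromRel_adj _ u v).2 ⟨hne, Or.inl h⟩

theorem adj_node_bit (s ℓ : Bool) (i : Fin k) (h : Fin logk) :
    (cGraph k logk x y).Adj (.node s ℓ i)
      (if i.val.testBit h.val then .t s ℓ h else .f s ℓ h) :=
  adj_of_cRel (by split <;> simp) (Or.inl ⟨s, ℓ, i, h, rfl, rfl⟩)

theorem adj_f_false_t_false (ℓ : Bool) (h : Fin logk) :
    (cGraph k logk x y).Adj (.f false ℓ h) (.t false ℓ h) :=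
  adj_of_cRel (by simp) (by unfold cRel; aesop)

theorem adj_t_false_f_true (ℓ : Bool) (h : Fin logk) :
    (cGraph k logk x y).Adj (.t false ℓ h) (.f true ℓ h) :=
  adj_of_cRel (by simp) (by unfold cRel; aesop)

theorem adj_t_true_f_false (ℓ : Bool) (h : Fin logk) :
    (cGraph k logk x y).Adj (.t true ℓ h) (.f false ℓ h) :=
  adj_of_cRel (by simp) (by unfold cRel; aesop)

theorem adj_c_c (s : Bool) {m m' : Fin 3} (hm : m ≠ m') :
    (cGraph k logk x y).Adj (.c s m) (.c s m') :=
  adj_of_cRel (by simpa using hm) (by unfold cRel; aesop)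

theorem adj_c_false_c_true {m m' : Fin 3} (hm : m ≠ m') :
    (cGraph k logk x y).Adj (.c false m) (.c true m') :=
  adj_of_cRel (by simp) (by unfold cRel; aesop)

theorem adj_node_bar (s ℓ : Bool) (i : Fin k) :
    (cGraph k logk x y).Adj (.node s ℓ i) (.bar s ℓ i) :=
  adj_of_cRel (by simp) (by unfold cRel; aesop)

theorem adj_bar_dbar (s ℓ : Bool) (i : Fin k) :
    (cGraph k logk x y).Adj (.bar s ℓ i) (.dbar s ℓ i) :=
  adj_of_cRel (by simp) (by unfold cRel; aesop)

theorem adj_dbar_bar_succ (s ℓ : Bool) (i : Fin k) (hi : i.val + 1 < k) :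
    (cGraph k logk x y).Adj (.dbar s ℓ i) (.bar s ℓ ⟨i.val + 1, hi⟩) :=
  adj_of_cRel (by simp) (by unfold cRel; aesop)

theorem adj_c_f (s ℓ : Bool) (h : Fin logk) :
    (cGraph k logk x y).Adj (.c s (ownIdx ℓ)) (.f s ℓ h) :=
  adj_of_cRel (by simp) (by unfold cRel; aesop)

theorem adj_c_t (s ℓ : Bool) (h : Fin logk) :
    (cGraph k logk x y).Adj (.c s (ownIdx ℓ)) (.t s ℓ h) :=
  adj_of_cRel (by simp) (by unfold cRel; aesop)

theorem adj_c_node (s ℓ : Bool) (i : Fin k) :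
    (cGraph k logk x y).Adj (.c s (othIdx ℓ)) (.node s ℓ i) :=
  adj_of_cRel (by simp) (by unfold cRel; aesop)

theorem adj_c_dbar (s ℓ : Bool) (i : Fin k) :
    (cGraph k logk x y).Adj (.c s (ownIdx ℓ)) (.dbar s ℓ i) :=
  adj_of_cRel (by simp) (by unfold cRel; aesop)

theorem adj_c_bar_zero (s ℓ : Bool) (hk : 0 < k) :
    (cGraph k logk x y).Adj (.c s (othIdx ℓ)) (.bar s ℓ ⟨0, hk⟩) :=
  adj_of_cRel (by simp) (by unfold cRel; aesop)

theorem adj_c_dbar_last (s ℓ : Bool) (hk : 0 < k) :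
    (cGraph k logk x y).Adj (.c s (othIdx ℓ)) (.dbar s ℓ ⟨k - 1, Nat.sub_lt hk one_pos⟩) :=
  adj_of_cRel (by simp) (by unfold cRel; aesop)

theorem adj_node_node_of_x {i j : Fin k} (hx : x i j = false) :
    (cGraph k logk x y).Adj (.node false false i) (.node false true j) :=
  adj_of_cRel (by simp) (by unfold cRel; aesop)

theorem adj_node_node_of_y {i j : Fin k} (hy : y i j = false) :
    (cGraph k logk x y).Adj (.node true false i) (.node true true j) :=
  adj_of_cRel (by simp) (by unfold cRel; aesop)

def witnessColor (sel : Bool → Fin k) : CVertex k logk → Fin 3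
  | .c _ m => m
  | .node _ ℓ i => if i = sel ℓ then 0 else ownIdx ℓ
  | .f _ ℓ h => if (sel ℓ).val.testBit h then 0 else othIdx ℓ
  | .t _ ℓ h => if (sel ℓ).val.testBit h then othIdx ℓ else 0
  | .bar _ ℓ i => if i < sel ℓ then 0 else if i = sel ℓ then ownIdx ℓ else othIdx ℓ
  | .dbar _ ℓ i => if i < sel ℓ then othIdx ℓ else 0

theorem witnessColor_ne_of_cRel (sel : Bool → Fin k) (hx : x (sel false) (sel true) = true)
    (hy : y (sel false) (sel true) = true) {u v : CVertex k logk} (h : cRel k logk x y u v) :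
    witnessColor sel u ≠ witnessColor sel v := by
  rcases h with ⟨s, ℓ, i, h, rfl, rfl⟩ | ⟨ℓ, h, hc⟩ | ⟨s, m, m', hm, rfl, rfl⟩ |
    ⟨m, m', hm, rfl, rfl⟩ | ⟨s, ℓ, i, rfl, rfl⟩ | ⟨s, ℓ, i, rfl, rfl⟩ |
    ⟨s, ℓ, i, hi, rfl, rfl⟩ | ⟨s, ℓ, h, rfl, rfl | rfl⟩ | ⟨s, ℓ, i, rfl, rfl⟩ |
    ⟨s, ℓ, i, rfl, rfl⟩ | ⟨s, ℓ, i, hi, rfl, rfl⟩ | ⟨s, ℓ, i, hi, rfl, rfl⟩ |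
    ⟨i, j, hij, rfl, rfl⟩ | ⟨i, j, hij, rfl, rfl⟩
  · split <;> simp only [witnessColor] <;> split_ifs <;> simp_all
  · rcases hc with ⟨rfl, rfl⟩ | ⟨rfl, rfl⟩ | ⟨rfl, rfl⟩ | ⟨rfl, rfl⟩ <;>
      simp only [witnessColor] <;> split_ifs <;> simp_all
  · exact hm
  · exact hm
  all_goals simp only [witnessColor]; split_ifs
  all_goals first
    | simp_all; done
    | (simp only [Fin.lt_def, Fin.ext_iff] at *; omega)
    | decide

def witnessColoring (sel : Bool → Fin k) (hx : x (sel false) (sel true) = true)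
    (hy : y (sel false) (sel true) = true) : (cGraph k logk x y).Coloring (Fin 3) :=
  SimpleGraph.Coloring.mk (witnessColor sel) fun {u v} hadj => by
    obtain ⟨-, h | h⟩ := (SimpleGraph.fromRel_adj _ u v).1 hadj
    exacts [witnessColor_ne_of_cRel sel hx hy h, (witnessColor_ne_of_cRel sel hx hy h).symm]

theorem exists_coloring_c_eq (h : (cGraph k logk x y).Colorable 3) :
    ∃ C : (cGraph k logk x y).Coloring (Fin 3), ∀ s m, C (.c s m) = m := by
  obtain ⟨C₀⟩ := h
  have hinj : Function.Injective fun m => C₀ (.c false m) := fun m m' heq =>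
    by_contra fun hne => C₀.valid (adj_c_c false hne) heq
  let e := Equiv.ofBijective _ hinj.bijective_of_finite
  let C : (cGraph k logk x y).Coloring (Fin 3) :=
    SimpleGraph.Coloring.mk (e.symm ∘ C₀) fun hadj => e.symm.injective.ne (C₀.valid hadj)
  have hfalse : ∀ m, C (.c false m) = m := e.symm_apply_apply
  refine ⟨C, fun s m => ?_⟩
  cases s
  · exact hfalse m
  · by_contra hne
    exact C.valid (adj_c_false_c_true hne) (hfalse _)

variable {C : (cGraph k logk x y).Coloring (Fin 3)}

theorem f_ne_ownIdx (hC : ∀ s m, C (.c s m) = m) (s ℓ : Bool) (h : Fin logk) :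
    C (.f s ℓ h) ≠ ownIdx ℓ := by
  simpa [hC] using (C.valid (adj_c_f s ℓ h)).symm

theorem t_ne_ownIdx (hC : ∀ s m, C (.c s m) = m) (s ℓ : Bool) (h : Fin logk) :
    C (.t s ℓ h) ≠ ownIdx ℓ := by
  simpa [hC] using (C.valid (adj_c_t s ℓ h)).symm

theorem f_eq_f_false (hC : ∀ s m, C (.c s m) = m) (s ℓ : Bool) (h : Fin logk) :
    C (.f s ℓ h) = C (.f false ℓ h) := by
  cases s
  · rfl
  · exact Fin.eq_of_ne_of_ne (t_ne_ownIdx hC false ℓ h).symm (f_ne_ownIdx hC false ℓ h).symm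
      (C.valid (adj_f_false_t_false ℓ h)).symm (f_ne_ownIdx hC true ℓ h)
      (C.valid (adj_t_false_f_true ℓ h)).symm

theorem t_eq_t_false (hC : ∀ s m, C (.c s m) = m) (s ℓ : Bool) (h : Fin logk) :
    C (.t s ℓ h) = C (.t false ℓ h) := by
  cases s
  · rfl
  · exact Fin.eq_of_ne_of_ne (f_ne_ownIdx hC false ℓ h).symm (t_ne_ownIdx hC false ℓ h).symm
      (C.valid (adj_f_false_t_false ℓ h)) (t_ne_ownIdx hC true ℓ h)
      (C.valid (adj_t_true_f_false ℓ h))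

theorem bit_eq_othIdx_of_node_eq_zero (hC : ∀ s m, C (.c s m) = m) {s ℓ : Bool} {i : Fin k}
    (hi : C (.node s ℓ i) = 0) (h : Fin logk) :
    C (if i.val.testBit h.val then .t s ℓ h else .f s ℓ h) = othIdx ℓ := by
  have hc : (cGraph k logk x y).Adj (.c s (ownIdx ℓ))
      (if i.val.testBit h.val then .t s ℓ h else .f s ℓ h) := by
    split
    exacts [adj_c_t s ℓ h, adj_c_f s ℓ h]
  exact C.eq_of_adj_of_adj (ownIdx_ne_zero ℓ) (ownIdx_ne_othIdx ℓ) (zero_ne_othIdx ℓ) hc.symm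
    (adj_node_bit s ℓ i h).symm (hC _ _) hi

theorem testBit_iff_of_node_eq_zero (hC : ∀ s m, C (.c s m) = m) {s ℓ : Bool} {i : Fin k}
    (hi : C (.node s ℓ i) = 0) (h : Fin logk) :
    i.val.testBit h.val = true ↔ C (.t false ℓ h) = othIdx ℓ := by
  have hbit := bit_eq_othIdx_of_node_eq_zero hC hi h
  cases hb : i.val.testBit h.val
  · rw [hb, if_neg Bool.false_ne_true, f_eq_f_false hC] at hbit
    simpa [← hbit] using (C.valid (adj_f_false_t_false ℓ h)).symm
  · rw [hb, if_pos rfl, t_eq_t_false hC] at hbit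
    simpa using hbit

theorem eq_of_node_eq_zero (hC : ∀ s m, C (.c s m) = m) (hk : k ≤ 2 ^ logk)
    {s s' ℓ : Bool} {i i' : Fin k} (hi : C (.node s ℓ i) = 0) (hi' : C (.node s' ℓ i') = 0) :
    i = i' :=
  Fin.ext <| Nat.eq_of_testBit_eq_of_lt_two_pow (i.2.trans_le hk) (i'.2.trans_le hk)
    fun j hj => Bool.eq_iff_iff.2 <| (testBit_iff_of_node_eq_zero hC hi ⟨j, hj⟩).trans
      (testBit_iff_of_node_eq_zero hC hi' ⟨j, hj⟩).symm

theorem dbar_eq_othIdx_of_bar_eq_zero (hC : ∀ s m, C (.c s m) = m) {s ℓ : Bool} {i : Fin k}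
    (hi : C (.bar s ℓ i) = 0) : C (.dbar s ℓ i) = othIdx ℓ :=
  C.eq_of_adj_of_adj (ownIdx_ne_zero ℓ) (ownIdx_ne_othIdx ℓ) (zero_ne_othIdx ℓ)
    (adj_c_dbar s ℓ i).symm (adj_bar_dbar s ℓ i).symm (hC _ _) hi

theorem bar_eq_zero_of_forall_node_ne_zero (hC : ∀ s m, C (.c s m) = m) {s ℓ : Bool}
    (hnode : ∀ i, C (.node s ℓ i) ≠ 0) (n : ℕ) (hn : n < k) :
    C (.bar s ℓ ⟨n, hn⟩) = 0 := by
  have hown : C (.node s ℓ ⟨n, hn⟩) = ownIdx ℓ :=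
    Fin.eq_of_ne_of_ne (zero_ne_othIdx ℓ) (zero_ne_ownIdx ℓ) (othIdx_ne_ownIdx ℓ) (hnode _)
      (by simpa [hC] using (C.valid (adj_c_node s ℓ ⟨n, hn⟩)).symm)
  have hprev : ∃ u, (cGraph k logk x y).Adj (.bar s ℓ ⟨n, hn⟩) u ∧ C u = othIdx ℓ := by
    cases n with
    | zero => exact ⟨_, (adj_c_bar_zero s ℓ hn).symm, hC _ _⟩
    | succ n =>
      exact ⟨_, (adj_dbar_bar_succ s ℓ ⟨n, by omega⟩ hn).symm,
        dbar_eq_othIdx_of_bar_eq_zero hC (bar_eq_zero_of_forall_node_ne_zero hC hnode n _)⟩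
  obtain ⟨u, hu, hCu⟩ := hprev
  exact C.eq_of_adj_of_adj (ownIdx_ne_othIdx ℓ) (ownIdx_ne_zero ℓ) (othIdx_ne_zero ℓ)
    (adj_node_bar s ℓ _).symm hu hown hCu

theorem exists_node_eq_zero (hC : ∀ s m, C (.c s m) = m) (hk : 0 < k) (s ℓ : Bool) :
    ∃ i, C (.node s ℓ i) = 0 := by
  by_contra! hnode
  have hlast := dbar_eq_othIdx_of_bar_eq_zero hC
    (bar_eq_zero_of_forall_node_ne_zero hC hnode (k - 1) (Nat.sub_lt hk one_pos))
  exact C.valid (adj_c_dbar_last s ℓ hk) ((hC _ _).trans hlast.symm)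

end cGraph

theorem cGraph_colorable_iff_not_disjoint_general (k logk : ℕ)
    (hpow : k = 2 ^ logk) (x y : Fin k → Fin k → Bool) :
    (cGraph k logk x y).Colorable 3 ↔ ∃ i j : Fin k, x i j = true ∧ y i j = true := by
  constructor
  · intro hcol
    obtain ⟨C, hC⟩ := cGraph.exists_coloring_c_eq hcol
    have hk : 0 < k := hpow ▸ Nat.two_pow_pos logk
    obtain ⟨i, hi⟩ := cGraph.exists_node_eq_zero hC hk false false
    obtain ⟨j, hj⟩ := cGraph.exists_node_eq_zero hC hk false true
    obtain ⟨i', hi'⟩ := cGraph.exists_node_eq_zero hC hk true false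
    obtain ⟨j', hj'⟩ := cGraph.exists_node_eq_zero hC hk true true
    obtain rfl := cGraph.eq_of_node_eq_zero hC hpow.le hi hi'
    obtain rfl := cGraph.eq_of_node_eq_zero hC hpow.le hj hj'
    refine ⟨i, j, ?_, ?_⟩
    · by_contra hx
      exact C.valid (cGraph.adj_node_node_of_x (by simpa using hx)) (hi.trans hj.symm)
    · by_contra hy
      exact C.valid (cGraph.adj_node_node_of_y (by simpa using hy)) (hi'.trans hj'.symm)
  · rintro ⟨i, j, hx, hy⟩
    exact ⟨cGraph.witnessColoring (fun ℓ => cond ℓ j i) hx hy⟩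

/-- the coloring lower-bound graph `G_{x,y}` is 3-colorable iff
`x` and `y` are not disjoint, i.e. iff there is a pair `(i, j)` with
`x i j = y i j = 1`. -/
theorem cGraph_colorable_iff_not_disjoint (k logk : ℕ) (hk : 2 ≤ k)
    (hpow : k = 2 ^ logk) (x y : Fin k → Fin k → Bool) :
    (cGraph k logk x y).Colorable 3 ↔ ∃ i j : Fin k, x i j = true ∧ y i j = true :=
  cGraph_colorable_iff_not_disjoint_general k logk hpow x y
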